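/- Let T > 0 and κ = √(T/(2π)). With ℱ(λ, 0, T) = f(λ; 1/T, 1/T) the equilibrium cumulant generating function of the confined tracer and 𝓘(j, 0, T) = sup_{λ∈ℝ}(λ j − ℱ(λ, 0, T)) its Legendre transform, one has for every λ and every j: lim_{ε↓0} ε^{−2} ℱ(ελ, 0, T) = κ λ² T² and lim_{ε↓0} ε^{−2} 𝓘(εj, 0, T) = j²/(4κT²). -/

import Mathlib

open MeasureTheory Filter
open scoped Topology

/-- `C(x,η) = ∫₀^∞ v e^{−η/v − x v²/2} dv`. -/
noncomputable def Ccal (x η : ℝ) : ℝ :=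
  ∫ v in Set.Ioi (0 : ℝ), v * Real.exp (-η / v - x * v ^ 2 / 2)

/-- `F(λ,η) = β_L β_R C(β_R+λ, η) C(β_L−λ, η)`. -/
noncomputable def Fcal (βL βR lam η : ℝ) : ℝ :=
  βL * βR * Ccal (βR + lam) η * Ccal (βL - lam) η

/-- `f : ℝ → [0,∞]` is the cumulant generating function of the current for
inverse wall temperatures `β_L, β_R`: `f(λ)` is the unique positive solution of
`F(λ, f(λ)) = 1` on `(−β_R, β_L)` off the interval between `β_L−β_R` and `0`,
`f ≡ 0` on that interval, and `f ≡ +∞` outside `(−β_R, β_L)`. -/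
def IsCGF (βL βR : ℝ) (f : ℝ → EReal) : Prop :=
  (∀ lam ∈ Set.uIcc (βL - βR) 0, f lam = 0) ∧
  (∀ lam ∈ Set.Ioo (-βR) βL \ Set.uIcc (βL - βR) 0,
      ∃ η : ℝ, 0 < η ∧ Fcal βL βR lam η = 1 ∧ f lam = (η : EReal)) ∧
  (∀ lam ∉ Set.Ioo (-βR) βL, f lam = ⊤)

/-- Legendre transform `𝓘(j) = sup_λ (λ j − ℱ(λ))`. -/
noncomputable def legendre (f : ℝ → EReal) (j : ℝ) : EReal :=
  ⨆ lam : ℝ, ((lam * j : ℝ) : EReal) - f lam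

/-!
Write `σ(x) = ∫₀^∞ e^{-xv²/2} dv`. Bounding `e^{-η/v}` between `1 - η/v` and
`1 - η/v + (η/v)^{3/2}` gives `C(x,η) = 1/x - η σ(x) + O(η^{3/2})`, so for `β_L = β_R = β` and
`η = O(λ²)` one gets `F(λ,η) = 1 + λ²/β² - 2βσ(β) η + o(λ²)`. As `F` is decreasing in `η`, the root
of `F(λ,η) = 1` satisfies `f(λ) ~ a λ²` with `a = 1/(2β³σ(β))`, and `a = κT²` for `β = 1/T`; this
gives the first limit. For the Legendre transform, small `λ` contribute at most
`sup_λ (λ ε j - a λ²) ≈ ε² j²/(4a)`, while away from `0` the function `f` grows at least linearly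
(it is `+∞` outside `(-β, β)` and the root stays away from `0` there), so those `λ` contribute
nothing once `ε` is small.
-/

open Set Real

lemma tendsto_coe_of_forall_bounds {α : Type*} {l : Filter α} {u : α → EReal} {a : ℝ}
    (h : ∀ c c', c < a → a < c' → ∀ᶠ y in l, (c : EReal) ≤ u y ∧ u y ≤ c') :
    Tendsto u l (𝓝 (a : EReal)) := by
  refine tendsto_order.2 ⟨fun b hb => ?_, fun b hb => ?_⟩
  · obtain ⟨c, hbc, hca⟩ := EReal.lt_iff_exists_real_btwn.mp hb
    filter_upwards [h c (a + 1) (EReal.coe_lt_coe_iff.mp hca) (by linarith)] with y hy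
    exact hbc.trans_le hy.1
  · obtain ⟨c', hac', hc'b⟩ := EReal.lt_iff_exists_real_btwn.mp hb
    filter_upwards [h (a - 1) c' (by linarith) (EReal.coe_lt_coe_iff.mp hac')] with y hy
    exact hy.2.trans_lt hc'b

lemma tendsto_inv_sq_mul_of_forall_bounds {u : ℝ → EReal} {a : ℝ}
    (h : ∀ c c', c < a → a < c' → ∀ᶠ ε in 𝓝[>] 0,
      ((c * ε ^ 2 : ℝ) : EReal) ≤ u ε ∧ u ε ≤ ((c' * ε ^ 2 : ℝ) : EReal)) :
    Tendsto (fun ε => (((ε ^ 2)⁻¹ : ℝ) : EReal) * u ε) (𝓝[>] 0) (𝓝 (a : EReal)) := by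
  refine tendsto_coe_of_forall_bounds fun c c' hc hc' => ?_
  filter_upwards [h c c' hc hc', self_mem_nhdsWithin] with ε ⟨hlow, hup⟩ (hε : 0 < ε)
  have hscale : ∀ d : ℝ, (d : EReal) = (((ε ^ 2)⁻¹ : ℝ) : EReal) * ((d * ε ^ 2 : ℝ) : EReal) :=
    fun d => by rw [← EReal.coe_mul]; congr 1; field_simp
  have hpos : (0 : EReal) ≤ (((ε ^ 2)⁻¹ : ℝ) : EReal) := EReal.coe_nonneg.mpr (by positivity)
  rw [hscale c, hscale c']
  exact ⟨mul_le_mul_of_nonneg_left hlow hpos, mul_le_mul_of_nonneg_left hup hpos⟩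

lemma tendsto_mul_const_nhdsGT_zero (b : ℝ) : Tendsto (fun ε : ℝ => ε * b) (𝓝[>] 0) (𝓝 0) :=
  ((continuous_mul_const b).tendsto' 0 0 (zero_mul b)).mono_left nhdsWithin_le_nhds

def IsQuadraticAtZero (g : ℝ → EReal) (a : ℝ) : Prop :=
  ∀ c c', c < a → a < c' → ∀ᶠ x in 𝓝 0,
    ((c * x ^ 2 : ℝ) : EReal) ≤ g x ∧ g x ≤ ((c' * x ^ 2 : ℝ) : EReal)

lemma le_legendre (g : ℝ → EReal) {j x s : ℝ} (h : g x ≤ s) :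
    ((x * j - s : ℝ) : EReal) ≤ legendre g j :=
  calc ((x * j - s : ℝ) : EReal) = ((x * j : ℝ) : EReal) - s := EReal.coe_sub _ _
    _ ≤ ((x * j : ℝ) : EReal) - g x := EReal.sub_le_sub le_rfl h
    _ ≤ legendre g j := le_iSup (fun x : ℝ => ((x * j : ℝ) : EReal) - g x) x

lemma legendre_le {g : ℝ → EReal} {j B : ℝ}
    (h : ∀ x, ∃ s : ℝ, (s : EReal) ≤ g x ∧ x * j - s ≤ B) : legendre g j ≤ B :=
  iSup_le fun x => by
    obtain ⟨s, hs, hB⟩ := h x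
    calc ((x * j : ℝ) : EReal) - g x ≤ ((x * j : ℝ) : EReal) - s := EReal.sub_le_sub le_rfl hs
      _ ≤ B := EReal.coe_le_coe_iff.mpr hB

namespace IsQuadraticAtZero

variable {g : ℝ → EReal} {a : ℝ}

lemma apply_zero (h : IsQuadraticAtZero g a) : g 0 = 0 := by
  obtain ⟨hlow, hup⟩ := (h (a - 1) (a + 1) (by linarith) (by linarith)).self_of_nhds
  simp only [ne_eq, OfNat.ofNat_ne_zero, not_false_eq_true, zero_pow, mul_zero,
    EReal.coe_zero] at hlow hup
  exact le_antisymm hup hlow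

lemma tendsto_inv_sq_mul_comp_mul (h : IsQuadraticAtZero g a) (lam : ℝ) :
    Tendsto (fun ε => (((ε ^ 2)⁻¹ : ℝ) : EReal) * g (ε * lam)) (𝓝[>] 0)
      (𝓝 ((a * lam ^ 2 : ℝ) : EReal)) := by
  refine tendsto_inv_sq_mul_of_forall_bounds fun c c' hc hc' => ?_
  rcases eq_or_ne lam 0 with rfl | hlam
  · simp only [mul_zero, h.apply_zero]
    simp only [ne_eq, OfNat.ofNat_ne_zero, not_false_eq_true, zero_pow, mul_zero] at hc hc'
    exact Eventually.of_forall fun ε =>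
      ⟨EReal.coe_nonpos.mpr (by nlinarith), EReal.coe_nonneg.mpr (by positivity)⟩
  have hl : 0 < lam ^ 2 := by positivity
  filter_upwards [(tendsto_mul_const_nhdsGT_zero lam).eventually (h (c / lam ^ 2) (c' / lam ^ 2)
    ((div_lt_iff₀ hl).mpr hc) ((lt_div_iff₀ hl).mpr hc'))] with ε hε
  have e : ∀ d : ℝ, d / lam ^ 2 * (ε * lam) ^ 2 = d * ε ^ 2 := fun d => by field_simp
  simpa only [e] using hε

lemma eventually_le_legendre (h : IsQuadraticAtZero g a) (j p : ℝ) {c' : ℝ} (hc' : a < c') :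
    ∀ᶠ ε in 𝓝[>] 0, (((p * j - c' * p ^ 2) * ε ^ 2 : ℝ) : EReal) ≤ legendre g (ε * j) := by
  filter_upwards [(tendsto_mul_const_nhdsGT_zero p).eventually (h (a - 1) c' (by linarith) hc')]
    with ε ⟨_, hup⟩
  convert le_legendre g hup using 2
  ring

lemma eventually_legendre_le (h : IsQuadraticAtZero g a)
    (hg : ∀ r > 0, ∃ m > 0, ∀ x, r ≤ |x| → ((m * |x| : ℝ) : EReal) ≤ g x)
    (j : ℝ) {c : ℝ} (hc₀ : 0 < c) (hc : c < a) :
    ∀ᶠ ε in 𝓝[>] 0, legendre g (ε * j) ≤ ((j ^ 2 / (4 * c) * ε ^ 2 : ℝ) : EReal) := by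
  obtain ⟨r, hr, hball⟩ := Metric.eventually_nhds_iff.mp (h c (a + 1) hc (by linarith))
  obtain ⟨m, hm, hlin⟩ := hg r hr
  filter_upwards [(tendsto_mul_const_nhdsGT_zero |j|).eventually (eventually_lt_nhds hm),
    self_mem_nhdsWithin] with ε hεj (hε : 0 < ε)
  refine legendre_le fun x => ?_
  have hB : 0 ≤ j ^ 2 / (4 * c) * ε ^ 2 := by positivity
  by_cases hx : |x| < r
  · refine ⟨c * x ^ 2, (hball (by simpa using hx)).1, ?_⟩
    rw [div_mul_eq_mul_div, le_div_iff₀ (by positivity)]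
    nlinarith [sq_nonneg (ε * j - 2 * c * x)]
  · refine ⟨m * |x|, hlin x (not_lt.mp hx), ?_⟩
    have : x * (ε * j) ≤ |x| * (ε * |j|) := by
      rw [← abs_of_pos hε, ← abs_mul, ← abs_mul, abs_of_pos hε]; exact le_abs_self _
    nlinarith [abs_nonneg x]

lemma tendsto_inv_sq_mul_legendre_comp_mul (h : IsQuadraticAtZero g a) (ha : 0 < a)
    (hg : ∀ r > 0, ∃ m > 0, ∀ x, r ≤ |x| → ((m * |x| : ℝ) : EReal) ≤ g x) (j : ℝ) :
    Tendsto (fun ε => (((ε ^ 2)⁻¹ : ℝ) : EReal) * legendre g (ε * j)) (𝓝[>] 0)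
      (𝓝 ((j ^ 2 / (4 * a) : ℝ) : EReal)) := by
  refine tendsto_inv_sq_mul_of_forall_bounds fun d d' hd hd' => ?_
  -- `p = j / (2a)` maximises `p j - a p²`, with maximum `j² / (4a)`.
  set p := j / (2 * a)
  have hlow : Tendsto (fun c' => p * j - c' * p ^ 2) (𝓝[>] a) (𝓝 (j ^ 2 / (4 * a))) := by
    have e : p * j - a * p ^ 2 = j ^ 2 / (4 * a) := by simp only [p]; field_simp; ring
    rw [← e]
    exact ((continuous_const.sub (continuous_id.mul continuous_const)).tendsto a).mono_left
      nhdsWithin_le_nhds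
  obtain ⟨c', hc'd, hac'⟩ := ((hlow.eventually (lt_mem_nhds hd)).and self_mem_nhdsWithin).exists
  have hup : Tendsto (fun c => j ^ 2 / (4 * c)) (𝓝[<] a) (𝓝 (j ^ 2 / (4 * a))) :=
    ((continuousAt_const.div (continuousAt_const.mul continuousAt_id)
      (mul_ne_zero four_ne_zero ha.ne')).tendsto).mono_left nhdsWithin_le_nhds
  have hlt : ∀ᶠ c in 𝓝[<] a, c < a := self_mem_nhdsWithin
  obtain ⟨c, hcd', hca, hc₀⟩ := ((hup.eventually (gt_mem_nhds hd')).and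
    (hlt.and (nhdsWithin_le_nhds (lt_mem_nhds ha)))).exists
  filter_upwards [h.eventually_le_legendre j p hac', h.eventually_legendre_le hg j hc₀ hca]
    with ε hε₁ hε₂
  exact ⟨(EReal.coe_le_coe_iff.mpr (by gcongr)).trans hε₁,
    hε₂.trans (EReal.coe_le_coe_iff.mpr (by gcongr))⟩

end IsQuadraticAtZero

noncomputable def gaussIoi (x : ℝ) : ℝ :=
  ∫ v in Ioi 0, exp (-(x / 2) * v ^ 2)

noncomputable def gaussIoiInvSqrt (x : ℝ) : ℝ :=
  ∫ v in Ioi 0, (√v)⁻¹ * exp (-(x / 2) * v ^ 2)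

lemma gaussIoi_eq (x : ℝ) : gaussIoi x = √(π / (x / 2)) / 2 :=
  integral_gaussian_Ioi _

lemma gaussIoi_pos {x : ℝ} (hx : 0 < x) : 0 < gaussIoi x := by
  rw [gaussIoi_eq]; positivity

@[fun_prop]
lemma continuousAt_gaussIoi {x : ℝ} (hx : 0 < x) : ContinuousAt gaussIoi x := by
  simp_rw [funext gaussIoi_eq]
  fun_prop (disch := positivity)

lemma mul_gaussIoi_le {β x : ℝ} (hx : 0 < x) (hxβ : x ≤ 2 * β) : x * gaussIoi x ≤ √(π * β) := by
  have h : x * gaussIoi x = √(π * x / 2) := by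
    rw [gaussIoi_eq, ← sqrt_sq hx.le, mul_div_assoc', ← sqrt_mul (sq_nonneg _), sqrt_sq hx.le,
      div_eq_iff two_ne_zero, ← sqrt_sq zero_le_two, ← sqrt_mul (by positivity)]
    congr 1; field_simp; ring
  rw [h]
  exact sqrt_le_sqrt (by nlinarith [pi_pos])

lemma integral_mul_exp_neg_half_mul_sq {x : ℝ} (hx : 0 < x) :
    ∫ v in Ioi 0, v * exp (-(x / 2) * v ^ 2) = x⁻¹ := by
  have h := integral_mul_cexp_neg_mul_sq (b := ((x / 2 : ℝ) : ℂ)) (by simpa using hx)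
  rw [← Complex.ofReal_inj]
  convert h using 1
  · rw [← integral_complex_ofReal]; push_cast; rfl
  · push_cast; ring

-- Second order would produce the non-integrable weight `1/v` at `0`; order `3/2` gives `1/√v`.
lemma exp_neg_le_one_sub_add_mul_sqrt {t : ℝ} (ht : 0 ≤ t) : exp (-t) ≤ 1 - t + t * √t := by
  obtain ⟨s, hs0, rfl⟩ : ∃ s : ℝ, 0 ≤ s ∧ s ^ 2 = t := ⟨√t, sqrt_nonneg t, sq_sqrt ht⟩
  rw [sqrt_sq hs0]
  rcases le_or_gt s 1 with h1 | h1
  · have h2 : exp (-(s ^ 2)) ≤ (1 + s ^ 2)⁻¹ := by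
      rw [exp_neg]
      exact inv_anti₀ (by positivity) (by linarith [add_one_le_exp (s ^ 2)])
    refine h2.trans ?_
    rw [← one_div, div_le_iff₀ (by positivity)]
    nlinarith [pow_nonneg hs0 3, mul_nonneg (pow_nonneg hs0 3) (sq_nonneg (1 - s))]
  · nlinarith [exp_le_one_iff.mpr (by nlinarith : -s ^ 2 ≤ 0)]

lemma integrableOn_exp_neg_half_mul_sq {x : ℝ} (hx : 0 < x) :
    IntegrableOn (fun v : ℝ => exp (-(x / 2) * v ^ 2)) (Ioi 0) :=
  (integrable_exp_neg_mul_sq (half_pos hx)).integrableOn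

lemma integrableOn_mul_exp_neg_half_mul_sq {x : ℝ} (hx : 0 < x) :
    IntegrableOn (fun v : ℝ => v * exp (-(x / 2) * v ^ 2)) (Ioi 0) :=
  (integrable_mul_exp_neg_mul_sq (half_pos hx)).integrableOn

lemma integrableOn_inv_sqrt_mul_exp_neg_half_mul_sq {x : ℝ} (hx : 0 < x) :
    IntegrableOn (fun v : ℝ => (√v)⁻¹ * exp (-(x / 2) * v ^ 2)) (Ioi 0) := by
  refine (integrableOn_rpow_mul_exp_neg_mul_sq (half_pos hx) (s := -(1 / 2))
    (by norm_num)).congr_fun (fun v hv => ?_) measurableSet_Ioi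
  simp only [sqrt_eq_rpow, rpow_neg (le_of_lt hv)]

lemma gaussIoiInvSqrt_antitoneOn : AntitoneOn gaussIoiInvSqrt (Ioi 0) :=
  fun q (hq : 0 < q) x _ hqx =>
    setIntegral_mono_on (integrableOn_inv_sqrt_mul_exp_neg_half_mul_sq (hq.trans_le hqx))
      (integrableOn_inv_sqrt_mul_exp_neg_half_mul_sq hq) measurableSet_Ioi fun v _ => by gcongr

lemma integrableOn_Ccal_integrand {x η : ℝ} (hx : 0 < x) (hη : 0 ≤ η) :
    IntegrableOn (fun v : ℝ => v * exp (-η / v - x * v ^ 2 / 2)) (Ioi 0) := by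
  refine (integrableOn_mul_exp_neg_half_mul_sq hx).mono' (by fun_prop) ?_
  filter_upwards [ae_restrict_mem measurableSet_Ioi] with v (hv : 0 < v)
  rw [norm_of_nonneg (by positivity)]
  gcongr
  have : 0 ≤ η / v := by positivity
  linarith [neg_div v η]

lemma sub_le_mul_exp_neg_div {v : ℝ} (η : ℝ) (hv : 0 < v) : v - η ≤ v * exp (-η / v) := by
  calc v - η = v * (1 - η / v) := by field_simp
    _ ≤ v * exp (-η / v) := by
      rw [neg_div]; exact mul_le_mul_of_nonneg_left (one_sub_le_exp_neg _) hv.le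

lemma mul_exp_neg_div_le {v η : ℝ} (hv : 0 < v) (hη : 0 ≤ η) :
    v * exp (-η / v) ≤ v - η + η * √η * (√v)⁻¹ := by
  calc v * exp (-η / v) ≤ v * (1 - η / v + η / v * √(η / v)) := by
        rw [neg_div]
        exact mul_le_mul_of_nonneg_left (exp_neg_le_one_sub_add_mul_sqrt (by positivity)) hv.le
    _ = v - η + η * √η * (√v)⁻¹ := by
        rw [sqrt_div' _ hv.le]
        field_simp

lemma Ccal_integrand_eq (x η v : ℝ) :
    v * exp (-η / v - x * v ^ 2 / 2) = v * exp (-η / v) * exp (-(x / 2) * v ^ 2) := by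
  rw [mul_assoc, ← exp_add]; ring_nf

lemma Ccal_nonneg (x η : ℝ) : 0 ≤ Ccal x η :=
  setIntegral_nonneg measurableSet_Ioi fun v (hv : 0 < v) => by positivity

lemma Ccal_antitone {x : ℝ} (hx : 0 < x) {η₁ η₂ : ℝ} (hη₁ : 0 ≤ η₁) (h : η₁ ≤ η₂) :
    Ccal x η₂ ≤ Ccal x η₁ := by
  refine setIntegral_mono_on (integrableOn_Ccal_integrand hx (hη₁.trans h))
    (integrableOn_Ccal_integrand hx hη₁) measurableSet_Ioi fun v (hv : 0 < v) => ?_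
  gcongr

lemma Ccal_ge {x η : ℝ} (hx : 0 < x) (hη : 0 ≤ η) : x⁻¹ - η * gaussIoi x ≤ Ccal x η := by
  have hv := integrableOn_mul_exp_neg_half_mul_sq hx
  have he := (integrableOn_exp_neg_half_mul_sq hx).const_mul η
  calc x⁻¹ - η * gaussIoi x
      = ∫ v in Ioi 0, (v * exp (-(x / 2) * v ^ 2) - η * exp (-(x / 2) * v ^ 2)) := by
        rw [integral_sub hv he, integral_mul_exp_neg_half_mul_sq hx, integral_const_mul, gaussIoi]
    _ ≤ Ccal x η := by
        refine setIntegral_mono_on (hv.sub he) (integrableOn_Ccal_integrand hx hη)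
          measurableSet_Ioi fun v (hv : 0 < v) => ?_
        rw [Ccal_integrand_eq, ← sub_mul]
        gcongr
        exact sub_le_mul_exp_neg_div η hv

lemma Ccal_le {x η : ℝ} (hx : 0 < x) (hη : 0 ≤ η) :
    Ccal x η ≤ x⁻¹ - η * gaussIoi x + η * √η * gaussIoiInvSqrt x := by
  have hv := integrableOn_mul_exp_neg_half_mul_sq hx
  have he := (integrableOn_exp_neg_half_mul_sq hx).const_mul η
  have hs := (integrableOn_inv_sqrt_mul_exp_neg_half_mul_sq hx).const_mul (η * √η)
  calc Ccal x η
      ≤ ∫ v in Ioi 0, (v * exp (-(x / 2) * v ^ 2) - η * exp (-(x / 2) * v ^ 2)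
          + η * √η * ((√v)⁻¹ * exp (-(x / 2) * v ^ 2))) := by
        refine setIntegral_mono_on (integrableOn_Ccal_integrand hx hη) ((hv.sub he).add hs)
          measurableSet_Ioi fun v (hv : 0 < v) => ?_
        rw [Ccal_integrand_eq]
        calc v * exp (-η / v) * exp (-(x / 2) * v ^ 2)
            ≤ (v - η + η * √η * (√v)⁻¹) * exp (-(x / 2) * v ^ 2) := by
              gcongr; exact mul_exp_neg_div_le hv hη
          _ = _ := by ring
    _ = x⁻¹ - η * gaussIoi x + η * √η * gaussIoiInvSqrt x := by
        rw [integral_add (f := fun v => v * exp (-(x / 2) * v ^ 2) - η * exp (-(x / 2) * v ^ 2))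
          (hv.sub he) hs, integral_sub hv he, integral_mul_exp_neg_half_mul_sq hx,
          integral_const_mul, integral_const_mul, gaussIoi, gaussIoiInvSqrt]

lemma Fcal_self (β x η : ℝ) : Fcal β β x η = β ^ 2 * (Ccal (β + x) η * Ccal (β - x) η) := by
  rw [Fcal]; ring

lemma Fcal_antitone {β x η₁ η₂ : ℝ} (hx : |x| < β) (hη₁ : 0 ≤ η₁) (h : η₁ ≤ η₂) :
    Fcal β β x η₂ ≤ Fcal β β x η₁ := by
  obtain ⟨h₁, h₂⟩ := abs_lt.mp hx
  have hp : 0 < β + x := by linarith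
  have hm : 0 < β - x := by linarith
  simp only [Fcal_self]
  exact mul_le_mul_of_nonneg_left (mul_le_mul (Ccal_antitone hp hη₁ h) (Ccal_antitone hm hη₁ h)
    (Ccal_nonneg _ _) (Ccal_nonneg _ _)) (sq_nonneg β)

lemma lt_of_Fcal_lt_Fcal {β x η η' : ℝ} (hx : |x| < β) (hη' : 0 ≤ η')
    (h : Fcal β β x η' < Fcal β β x η) : η < η' := by
  by_contra! h'
  exact (Fcal_antitone hx hη' h').not_gt h

lemma Fcal_ge {β x η : ℝ} (hx : |x| < β) (hη : 0 ≤ η)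
    (hP : 0 ≤ (β - x)⁻¹ - η * gaussIoi (β - x)) :
    β ^ 2 * (((β + x)⁻¹ - η * gaussIoi (β + x)) * ((β - x)⁻¹ - η * gaussIoi (β - x)))
      ≤ Fcal β β x η := by
  obtain ⟨h₁, h₂⟩ := abs_lt.mp hx
  have hp : 0 < β + x := by linarith
  have hm : 0 < β - x := by linarith
  rw [Fcal_self]
  exact mul_le_mul_of_nonneg_left
    (mul_le_mul (Ccal_ge hp hη) (Ccal_ge hm hη) hP (Ccal_nonneg _ _)) (sq_nonneg β)

lemma Fcal_le {β x η : ℝ} (hx : |x| < β / 2) (hη : 0 ≤ η) :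
    Fcal β β x η ≤ β ^ 2 * (((β + x)⁻¹ - η * gaussIoi (β + x) + η * √η * gaussIoiInvSqrt (β / 2))
      * ((β - x)⁻¹ - η * gaussIoi (β - x) + η * √η * gaussIoiInvSqrt (β / 2))) := by
  obtain ⟨h₁, h₂⟩ := abs_lt.mp hx
  have hC : ∀ y, β / 2 ≤ y →
      Ccal y η ≤ y⁻¹ - η * gaussIoi y + η * √η * gaussIoiInvSqrt (β / 2) := fun y hy => by
    have hK := gaussIoiInvSqrt_antitoneOn (show 0 < β / 2 by linarith)
      (show 0 < y by linarith) hy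
    have := Ccal_le (show 0 < y by linarith) hη
    nlinarith [mul_nonneg hη (sqrt_nonneg η)]
  have hp : β / 2 ≤ β + x := by linarith
  have hm : β / 2 ≤ β - x := by linarith
  rw [Fcal_self]
  exact mul_le_mul_of_nonneg_left (mul_le_mul (hC _ hp) (hC _ hm) (Ccal_nonneg _ _)
    ((Ccal_nonneg _ _).trans (hC _ hp))) (sq_nonneg β)

lemma tendsto_mul_sub_one_div_sq {β : ℝ} (hβ : 0 < β) {a b : ℝ → ℝ}
    (ha : ContinuousAt a 0) (hb : ContinuousAt b 0) :
    Tendsto (fun x => (β ^ 2 * (((β + x)⁻¹ - x ^ 2 * a x) * ((β - x)⁻¹ - x ^ 2 * b x)) - 1) / x ^ 2)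
      (𝓝[≠] 0) (𝓝 ((β ^ 2)⁻¹ - β * (a 0 + b 0))) := by
  set H : ℝ → ℝ := fun x =>
    (β ^ 2 - x ^ 2)⁻¹ - β ^ 2 * (a x / (β - x) + b x / (β + x)) + x ^ 2 * β ^ 2 * a x * b x
  have hH : ContinuousAt H 0 := by
    have : β ^ 2 - 0 ^ 2 ≠ 0 := by simp [hβ.ne']
    have : β - 0 ≠ 0 := by simp [hβ.ne']
    have : β + 0 ≠ 0 := by simp [hβ.ne']
    fun_prop (disch := assumption)
  have hH0 : H 0 = (β ^ 2)⁻¹ - β * (a 0 + b 0) := by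
    simp [H]; field_simp
  rw [← hH0]
  refine (hH.tendsto.mono_left nhdsWithin_le_nhds).congr' ?_
  filter_upwards [self_mem_nhdsWithin,
    nhdsWithin_le_nhds (Ioo_mem_nhds (neg_lt_zero.mpr hβ) hβ)] with x (hx : x ≠ 0) ⟨h₁, h₂⟩
  have : β + x ≠ 0 := by linarith
  have : β - x ≠ 0 := by linarith
  have : β ^ 2 - x ^ 2 ≠ 0 := by nlinarith
  simp only [H]
  field_simp
  ring

noncomputable def quadCoeff (β : ℝ) : ℝ := (2 * β ^ 3 * gaussIoi β)⁻¹

lemma quadCoeff_pos {β : ℝ} (hβ : 0 < β) : 0 < quadCoeff β := by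
  have := gaussIoi_pos hβ
  unfold quadCoeff; positivity

lemma inv_sq_sub_eq_mul_quadCoeff_sub {β : ℝ} (hβ : 0 < β) (c : ℝ) :
    (β ^ 2)⁻¹ - β * (c * gaussIoi β + c * gaussIoi β)
      = 2 * β * gaussIoi β * (quadCoeff β - c) := by
  have := (gaussIoi_pos hβ).ne'
  unfold quadCoeff
  field_simp
  ring

lemma eventually_one_lt_Fcal {β c : ℝ} (hβ : 0 < β) (hc₀ : 0 ≤ c) (hc : c < quadCoeff β) :
    ∀ᶠ x in 𝓝[≠] 0, 1 < Fcal β β x (c * x ^ 2) := by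
  have hβ₀ : 0 < β + 0 := by simpa using hβ
  have hβ₀' : 0 < β - 0 := by simpa using hβ
  have hlim := tendsto_mul_sub_one_div_sq hβ (a := fun x => c * gaussIoi (β + x))
    (b := fun x => c * gaussIoi (β - x)) (by fun_prop (disch := assumption))
    (by fun_prop (disch := assumption))
  simp only [add_zero, sub_zero, inv_sq_sub_eq_mul_quadCoeff_sub hβ] at hlim
  have hpos : 0 < 2 * β * gaussIoi β * (quadCoeff β - c) := by
    have := gaussIoi_pos hβ
    have : 0 < quadCoeff β - c := by linarith
    positivity
  have hP : ∀ᶠ x in 𝓝 0, 0 < (β - x)⁻¹ - x ^ 2 * (c * gaussIoi (β - x)) := by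
    refine ContinuousAt.eventually_lt (f := fun _ => (0 : ℝ)) continuousAt_const ?_ ?_
    · have : β - 0 ≠ 0 := hβ₀'.ne'
      fun_prop (disch := assumption)
    · simpa using hβ
  filter_upwards [hlim.eventually (eventually_gt_nhds hpos), self_mem_nhdsWithin,
    nhdsWithin_le_nhds (hP.and (eventually_abs_sub_lt 0 hβ))]
    with x hx (hx₀ : x ≠ 0) ⟨hPx, hxβ⟩
  rw [sub_zero] at hxβ
  have hx₂ : 0 < x ^ 2 := by positivity
  have h1 := (lt_div_iff₀ hx₂).mp hx
  rw [zero_mul] at h1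
  calc 1 < β ^ 2 * (((β + x)⁻¹ - x ^ 2 * (c * gaussIoi (β + x)))
        * ((β - x)⁻¹ - x ^ 2 * (c * gaussIoi (β - x)))) := by linarith
    _ = β ^ 2 * (((β + x)⁻¹ - c * x ^ 2 * gaussIoi (β + x))
        * ((β - x)⁻¹ - c * x ^ 2 * gaussIoi (β - x))) := by ring
    _ ≤ Fcal β β x (c * x ^ 2) := Fcal_ge hxβ (by positivity) (by linarith)

lemma eventually_Fcal_lt_one {β c : ℝ} (hβ : 0 < β) (hc : quadCoeff β < c) :
    ∀ᶠ x in 𝓝[≠] 0, Fcal β β x (c * x ^ 2) < 1 := by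
  have hc₀ : 0 < c := (quadCoeff_pos hβ).trans hc
  have hβ₀ : 0 < β + 0 := by simpa using hβ
  have hβ₀' : 0 < β - 0 := by simpa using hβ
  set K := gaussIoiInvSqrt (β / 2)
  have hlim := tendsto_mul_sub_one_div_sq hβ
    (a := fun x => c * gaussIoi (β + x) - c * √(c * x ^ 2) * K)
    (b := fun x => c * gaussIoi (β - x) - c * √(c * x ^ 2) * K)
    (by fun_prop (disch := assumption)) (by fun_prop (disch := assumption))
  simp only [add_zero, sub_zero, ne_eq, OfNat.ofNat_ne_zero, not_false_eq_true, zero_pow,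
    mul_zero, sqrt_zero, zero_mul, inv_sq_sub_eq_mul_quadCoeff_sub hβ] at hlim
  have hneg : 2 * β * gaussIoi β * (quadCoeff β - c) < 0 :=
    mul_neg_of_pos_of_neg (by have := gaussIoi_pos hβ; positivity) (by linarith)
  filter_upwards [hlim.eventually (eventually_lt_nhds hneg), self_mem_nhdsWithin,
    nhdsWithin_le_nhds (eventually_abs_sub_lt 0 (half_pos hβ))] with x hx (hx₀ : x ≠ 0) hxβ
  rw [sub_zero] at hxβ
  have hx₂ : 0 < x ^ 2 := by positivity
  have h1 := (div_lt_iff₀ hx₂).mp hx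
  rw [zero_mul] at h1
  calc Fcal β β x (c * x ^ 2)
      ≤ β ^ 2 * (((β + x)⁻¹ - c * x ^ 2 * gaussIoi (β + x) + c * x ^ 2 * √(c * x ^ 2) * K)
        * ((β - x)⁻¹ - c * x ^ 2 * gaussIoi (β - x) + c * x ^ 2 * √(c * x ^ 2) * K)) :=
        Fcal_le hxβ (by positivity)
    _ = β ^ 2 * (((β + x)⁻¹ - x ^ 2 * (c * gaussIoi (β + x) - c * √(c * x ^ 2) * K))
        * ((β - x)⁻¹ - x ^ 2 * (c * gaussIoi (β - x) - c * √(c * x ^ 2) * K))) := by ring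
    _ < 1 := by linarith

lemma one_lt_Fcal_of_mul_lt {β x η : ℝ} (hx : |x| < β) (hη : 0 ≤ η)
    (h : 2 * β ^ 2 * (√(π * β) * η) < x ^ 2) : 1 < Fcal β β x η := by
  obtain ⟨h₁, h₂⟩ := abs_lt.mp hx
  set t := √(π * β) * η
  have hP : ∀ y, 0 < y → y ≤ 2 * β → y⁻¹ * (1 - t) ≤ y⁻¹ - η * gaussIoi y := fun y hy hyβ => by
    have hσ : gaussIoi y ≤ √(π * β) / y := by
      rw [le_div_iff₀ hy, mul_comm]; exact mul_gaussIoi_le hy hyβ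
    calc y⁻¹ * (1 - t) = y⁻¹ - η * (√(π * β) / y) := by simp only [t]; field_simp
      _ ≤ y⁻¹ - η * gaussIoi y := by gcongr
  have hp : 0 < β + x := by linarith
  have hm : 0 < β - x := by linarith
  have ht : t < 1 := by nlinarith
  have hPp := hP _ hp (by linarith)
  have hPm := hP _ hm (by linarith)
  calc 1 < β ^ 2 * ((β + x)⁻¹ * (1 - t) * ((β - x)⁻¹ * (1 - t))) := by
        rw [show β ^ 2 * ((β + x)⁻¹ * (1 - t) * ((β - x)⁻¹ * (1 - t)))
          = β ^ 2 * (1 - t) ^ 2 / ((β + x) * (β - x)) by field_simp,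
          one_lt_div (by positivity)]
        nlinarith [mul_nonneg (sq_nonneg β) (sq_nonneg t)]
    _ ≤ β ^ 2 * (((β + x)⁻¹ - η * gaussIoi (β + x)) * ((β - x)⁻¹ - η * gaussIoi (β - x))) := by
        have : 0 ≤ 1 - t := by linarith
        exact mul_le_mul_of_nonneg_left (mul_le_mul hPp hPm (by positivity)
          ((by positivity : (0 : ℝ) ≤ (β + x)⁻¹ * (1 - t)).trans hPp)) (sq_nonneg β)
    _ ≤ Fcal β β x η := Fcal_ge hx hη ((by positivity : (0 : ℝ) ≤ (β - x)⁻¹ * (1 - t)).trans hPm)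

namespace IsCGF

variable {β : ℝ} {f : ℝ → EReal}

lemma apply_zero (hf : IsCGF β β f) : f 0 = 0 :=
  hf.1 0 (by simp)

lemma exists_eq (hf : IsCGF β β f) {x : ℝ} (hx₀ : x ≠ 0) (hx : |x| < β) :
    ∃ η : ℝ, 0 < η ∧ Fcal β β x η = 1 ∧ f x = η :=
  hf.2.1 x ⟨⟨(abs_lt.mp hx).1, (abs_lt.mp hx).2⟩, by simpa using hx₀⟩

lemma eq_top (hf : IsCGF β β f) {x : ℝ} (hx : β ≤ |x|) : f x = ⊤ :=
  hf.2.2 x fun h => hx.not_gt (abs_lt.mpr h)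

lemma isQuadraticAtZero (hβ : 0 < β) (hf : IsCGF β β f) : IsQuadraticAtZero f (quadCoeff β) := by
  intro c c' hc hc'
  have hc0 : max c 0 < quadCoeff β := max_lt hc (quadCoeff_pos hβ)
  filter_upwards [eventually_nhdsWithin_iff.mp (eventually_one_lt_Fcal hβ (le_max_right c 0) hc0),
    eventually_nhdsWithin_iff.mp (eventually_Fcal_lt_one hβ hc'), eventually_abs_sub_lt 0 hβ]
    with x hlow hup hxβ
  rw [sub_zero] at hxβ
  rcases eq_or_ne x 0 with rfl | hx₀
  · simp [hf.apply_zero]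
  obtain ⟨η, hη, hFη, hfx⟩ := hf.exists_eq hx₀ hxβ
  have hη₁ := lt_of_Fcal_lt_Fcal hxβ hη.le (hFη ▸ hlow hx₀)
  have hc'0 : 0 < c' := (quadCoeff_pos hβ).trans hc'
  have hη₂ := lt_of_Fcal_lt_Fcal hxβ (by positivity) (hFη ▸ hup hx₀)
  rw [hfx, EReal.coe_le_coe_iff, EReal.coe_le_coe_iff]
  exact ⟨by nlinarith [le_max_left c 0, sq_nonneg x], hη₂.le⟩

lemma exists_mul_abs_le (hβ : 0 < β) (hf : IsCGF β β f) {r : ℝ} (hr : 0 < r) :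
    ∃ m > 0, ∀ x, r ≤ |x| → ((m * |x| : ℝ) : EReal) ≤ f x := by
  set M := √(π * β)
  have hM : 0 < M := sqrt_pos.mpr (by positivity)
  set m₀ := r ^ 2 / (4 * β ^ 2 * M)
  refine ⟨m₀ / β, by positivity, fun x hx => ?_⟩
  rcases lt_or_ge |x| β with hxβ | hxβ
  · obtain ⟨η, hη, hFη, hfx⟩ := hf.exists_eq (abs_pos.mp (hr.trans_le hx)) hxβ
    have hm₀ : m₀ < η := by
      by_contra! hη'
      have hsmall : 2 * β ^ 2 * (M * η) < x ^ 2 := by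
        have : 2 * β ^ 2 * (M * m₀) = r ^ 2 / 2 := by simp only [m₀]; field_simp; ring
        have : r ^ 2 ≤ x ^ 2 := by nlinarith [sq_abs x, abs_nonneg x]
        nlinarith [mul_le_mul_of_nonneg_left hη' (by positivity : 0 ≤ 2 * β ^ 2 * M)]
      linarith [one_lt_Fcal_of_mul_lt hxβ hη.le hsmall]
    rw [hfx, EReal.coe_le_coe_iff]
    calc m₀ / β * |x| ≤ m₀ := by
          rw [div_mul_eq_mul_div, div_le_iff₀ hβ]; gcongr
      _ ≤ η := hm₀.le
  · rw [hf.eq_top hxβ]; exact le_top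

end IsCGF

lemma quadCoeff_one_div {T : ℝ} (hT : 0 < T) :
    quadCoeff (1 / T) = √(T / (2 * π)) * T ^ 2 := by
  have hsq : √(T / (2 * π)) * √(2 * π * T) = T := by
    rw [← sqrt_mul (by positivity), show T / (2 * π) * (2 * π * T) = T ^ 2 by field_simp,
      sqrt_sq hT.le]
  rw [quadCoeff, gaussIoi_eq, show π / (1 / T / 2) = 2 * π * T by field_simp]
  field_simp
  rw [show 2 * T * π = 2 * π * T by ring]
  linarith

/-- Equilibrium (`τ = 0`) scaling limits: with both walls at temperature `T` and
`κ = √(T/(2π))`, `lim_{ε↓0} ε⁻² ℱ(ελ, 0, T) = κ λ² T²` and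
`lim_{ε↓0} ε⁻² 𝓘(εj, 0, T) = j²/(4κT²)`. -/
theorem equilibrium_scaling_limit
    (T : ℝ) (hT : 0 < T) (κ : ℝ) (hκ : κ = Real.sqrt (T / (2 * Real.pi)))
    (f : ℝ → EReal) (hf : IsCGF (1 / T) (1 / T) f) :
    (∀ lam : ℝ,
      Tendsto (fun ε : ℝ => (((ε ^ 2)⁻¹ : ℝ) : EReal) * f (ε * lam))
        (𝓝[>] 0) (nhds ((κ * lam ^ 2 * T ^ 2 : ℝ) : EReal))) ∧
    (∀ j : ℝ,
      Tendsto (fun ε : ℝ => (((ε ^ 2)⁻¹ : ℝ) : EReal) * legendre f (ε * j))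
        (𝓝[>] 0) (nhds ((j ^ 2 / (4 * κ * T ^ 2) : ℝ) : EReal))) := by
  have hβ : 0 < 1 / T := by positivity
  have hq := hf.isQuadraticAtZero hβ
  rw [quadCoeff_one_div hT, ← hκ] at hq
  refine ⟨fun lam => ?_, fun j => ?_⟩
  · simpa only [mul_right_comm κ] using hq.tendsto_inv_sq_mul_comp_mul lam
  · simpa only [mul_assoc] using hq.tendsto_inv_sq_mul_legendre_comp_mul
      (by rw [hκ]; positivity) (fun r hr => hf.exists_mul_abs_le hβ hr) j
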